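/- arXiv:2110.14748 — 2 statements merged into one kernel-verified Lean document; each statement's English description precedes it below -/
import Mathlib

section
/- For a weighted context tree of maximal depth D over an m-ary alphabet, where each node s at depth d < D has weighted probability P_w^s = γ·P_e(a_s) + (1-γ)·∏_{j=0}^{m-1} P_w^{js} and each node at depth D has P_w^s = P_e(a_s), the root weighted probability satisfies P_w^λ = Σ_{S ∈ C_D} π_D(S) ∏_{s∈S} P_e(a_s), where π_D(S) = (1-γ)^{(|S|-1)/(m-1)} · γ^{|S| - L_D(S)} and the sum is over all complete proper context sets S of depth at most D. -/
open Finset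

/-- All strings of length exactly `k` over the alphabet `Fin m`. -/
def listsLen (m : ℕ) : ℕ → Finset (List (Fin m))
  | 0 => {[]}
  | k + 1 => ((Finset.univ : Finset (Fin m)) ×ˢ listsLen m k).image (fun p => p.1 :: p.2)

/-- All strings of length at most `D` over the alphabet `Fin m`. -/
def listsUpTo (m D : ℕ) : Finset (List (Fin m)) :=
  (Finset.range (D + 1)).biUnion (fun k => listsLen m k)

/-- `C_D`: all complete and proper context sets (models) of depth at most `D`
over the `m`-ary alphabet.  Properness: no element is a (not necessarily
proper) suffix of a different element.  Completeness: every string of length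
`D` has a suffix in the set. -/
def contextSets (m D : ℕ) : Finset (Finset (List (Fin m))) :=
  (listsUpTo m D).powerset.filter
    (fun S => (∀ s ∈ S, ∀ t ∈ S, s <:+ t → s = t) ∧
      ∀ l ∈ listsLen m D, ∃ s ∈ S, s <:+ l)

/-- The prior `π_D(S) = (1-γ)^((|S|-1)/(m-1)) γ^(|S| - L_D(S))` on models. -/
noncomputable def modelPrior (m : ℕ) (γ : ℝ) (D : ℕ) (S : Finset (List (Fin m))) : ℝ :=
  (1 - γ) ^ ((S.card - 1) / (m - 1)) * γ ^ (S.card - (S.filter (fun s => s.length = D)).card)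

/-- The weighted probability `P_w^s` of a node `s` with remaining depth `d`:
at remaining depth `0` (i.e. at maximal depth `D`) it is `P_e(a_s)`, and
otherwise `γ P_e(a_s) + (1-γ) ∏_j P_w^{js}`. -/
noncomputable def Pw (m : ℕ) (γ : ℝ) (Pe : List (Fin m) → ℝ) : ℕ → List (Fin m) → ℝ
  | 0, s => Pe s
  | d + 1, s => γ * Pe s + (1 - γ) * ∏ j : Fin m, Pw m γ Pe d (j :: s)

/-!
A model of depth `d + 1` other than `{[]}` is obtained in exactly one way by grafting `m` models
of depth `d` below the root, one for each symbol. Grafting adds `m - 1` leaves and turns the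
leaves at depth `d` into the leaves at depth `d + 1`, so the prior factors as
`π_{d+1}(graft g) = (1 - γ) ∏ⱼ π_d(g j)`, while `π_{d+1}({[]}) = γ`. Expanding the product of
sums in the recursion for `P_w` (proved for every node `s`, by induction on the remaining depth)
therefore reproduces the sum over models term by term.
-/

namespace ContextTree

section Graft

variable {α : Type*}

noncomputable def subtree (T : Finset (List α)) (j : α) : Finset (List α) :=
  T.preimage (· ++ [j]) (List.append_left_injective [j]).injOn

@[simp]
lemma mem_subtree {T : Finset (List α)} {j : α} {u : List α} :
    u ∈ subtree T j ↔ u ++ [j] ∈ T :=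
  mem_preimage

variable [DecidableEq α]

lemma pairwiseDisjoint_image_append_singleton (g : α → Finset (List α)) :
    (Set.univ : Set α).PairwiseDisjoint fun j => (g j).image (· ++ [j]) := by
  intro i _ j _ hij
  simp only [Function.onFun, disjoint_left, mem_image]
  rintro _ ⟨u, _, rfl⟩ ⟨v, _, h⟩
  exact hij (List.singleton_inj.mp (List.append_inj' h rfl).2).symm

variable [Fintype α]

/-- Contexts list the most recent symbol first, so the symbol next to the root is the last entry
of the list. -/
def graft (g : α → Finset (List α)) : Finset (List α) :=
  univ.biUnion fun j => (g j).image (· ++ [j])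

@[simp]
lemma mem_graft {g : α → Finset (List α)} {t : List α} :
    t ∈ graft g ↔ ∃ j, ∃ u ∈ g j, u ++ [j] = t := by
  simp [graft]

lemma nil_notMem_graft (g : α → Finset (List α)) : [] ∉ graft g := by
  simp

lemma subtree_graft (g : α → Finset (List α)) (j : α) : subtree (graft g) j = g j := by
  ext u
  simp

lemma graft_subtree {T : Finset (List α)} (hT : [] ∉ T) : graft (subtree T) = T := by
  ext t
  simp only [mem_graft, mem_subtree]
  constructor
  · rintro ⟨j, u, hu, rfl⟩
    exact hu
  · intro ht
    have hne : t ≠ [] := ne_of_mem_of_not_mem ht hT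
    exact ⟨t.getLast hne, t.dropLast, by rwa [List.dropLast_append_getLast],
      List.dropLast_append_getLast hne⟩

lemma prod_graft {M : Type*} [CommMonoid M] (g : α → Finset (List α)) (f : List α → M) :
    ∏ t ∈ graft g, f t = ∏ j, ∏ u ∈ g j, f (u ++ [j]) := by
  rw [graft, prod_biUnion (by simpa using pairwiseDisjoint_image_append_singleton g)]
  exact prod_congr rfl fun j _ => prod_image fun u _ v _ h => List.append_left_injective _ h

lemma card_graft (g : α → Finset (List α)) : #(graft g) = ∑ j, #(g j) := by
  rw [graft, card_biUnion (by simpa using pairwiseDisjoint_image_append_singleton g)]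
  exact sum_congr rfl fun j _ => card_image_of_injective _ (List.append_left_injective _)

lemma filter_graft (g : α → Finset (List α)) (p : List α → Prop) [DecidablePred p] :
    (graft g).filter p = graft fun j => (g j).filter fun u => p (u ++ [j]) := by
  ext t
  simp only [mem_filter, mem_graft]
  aesop

end Graft

variable {m : ℕ}

@[simp]
lemma mem_listsLen {k : ℕ} {l : List (Fin m)} : l ∈ listsLen m k ↔ l.length = k := by
  induction k generalizing l with
  | zero => simp [listsLen]
  | succ k ih => cases l <;> simp [listsLen, ih]

@[simp]
lemma mem_listsUpTo {D : ℕ} {l : List (Fin m)} : l ∈ listsUpTo m D ↔ l.length ≤ D := by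
  simp [listsUpTo]

lemma mem_contextSets {D : ℕ} {T : Finset (List (Fin m))} :
    T ∈ contextSets m D ↔
      (∀ t ∈ T, t.length ≤ D) ∧ (∀ s ∈ T, ∀ t ∈ T, s <:+ t → s = t) ∧
      (∀ l : List (Fin m), l.length = D → ∃ s ∈ T, s <:+ l) := by
  simp only [contextSets, mem_filter, mem_powerset, subset_iff, mem_listsUpTo, mem_listsLen]

lemma singleton_nil_mem_contextSets (D : ℕ) : {[]} ∈ contextSets m D :=
  mem_contextSets.mpr ⟨by simp, by simp, fun l _ => ⟨[], mem_singleton_self _, l.nil_suffix⟩⟩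

lemma eq_singleton_nil_of_nil_mem {D : ℕ} {T : Finset (List (Fin m))}
    (hT : T ∈ contextSets m D) (hnil : [] ∈ T) : T = {[]} :=
  eq_singleton_iff_unique_mem.mpr
    ⟨hnil, fun t ht => ((mem_contextSets.mp hT).2.1 [] hnil t ht t.nil_suffix).symm⟩

lemma contextSets_zero : contextSets m 0 = {{[]}} := by
  ext T
  rw [mem_singleton]
  refine ⟨fun hT => ?_, fun h => h ▸ singleton_nil_mem_contextSets 0⟩
  obtain ⟨s, hs, hsuf⟩ := (mem_contextSets.mp hT).2.2 [] rfl
  rw [List.suffix_nil.mp hsuf] at hs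
  exact eq_singleton_nil_of_nil_mem hT hs

lemma graft_mem_contextSets {d : ℕ} {g : Fin m → Finset (List (Fin m))}
    (hg : ∀ j, g j ∈ contextSets m d) : graft g ∈ contextSets m (d + 1) := by
  simp only [mem_contextSets] at hg
  refine mem_contextSets.mpr ⟨?_, ?_, fun l hl => ?_⟩
  · simp only [mem_graft, forall_exists_index, and_imp]
    rintro _ j u hu rfl
    simpa using (hg j).1 u hu
  · simp only [mem_graft, forall_exists_index, and_imp]
    rintro _ i u hu rfl _ j v hv rfl ⟨p, hp⟩
    rw [← List.append_assoc] at hp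
    obtain ⟨hpuv, hij⟩ := List.append_inj' hp (by simp)
    cases List.singleton_inj.mp hij
    rw [(hg i).2.1 u hu v hv ⟨p, hpuv⟩]
  · have hne : l ≠ [] := List.ne_nil_of_length_pos (by omega)
    obtain ⟨u, hu, p, hp⟩ := (hg (l.getLast hne)).2.2 l.dropLast (by simp [hl])
    exact ⟨u ++ [l.getLast hne], mem_graft.mpr ⟨_, u, hu, rfl⟩, p,
      by rw [← List.append_assoc, hp, List.dropLast_append_getLast]⟩

lemma subtree_mem_contextSets {d : ℕ} {T : Finset (List (Fin m))}
    (hT : T ∈ contextSets m (d + 1)) (hnil : [] ∉ T) (j : Fin m) :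
    subtree T j ∈ contextSets m d := by
  obtain ⟨hlen, hprop, hcomp⟩ := mem_contextSets.mp hT
  refine mem_contextSets.mpr ⟨fun u hu => ?_, fun u hu v hv ⟨p, hp⟩ => ?_, fun l hl => ?_⟩
  · simpa using hlen _ (mem_subtree.mp hu)
  · have := hprop _ (mem_subtree.mp hu) _ (mem_subtree.mp hv) ⟨p, by rw [← hp, List.append_assoc]⟩
    exact List.append_left_injective _ this
  · obtain ⟨s, hs, p, hp⟩ := hcomp (l ++ [j]) (by simp [hl])
    have hsne : s ≠ [] := ne_of_mem_of_not_mem hs hnil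
    rw [← List.dropLast_append_getLast hsne] at hs hp
    rw [← List.append_assoc] at hp
    obtain ⟨hpl, hj⟩ := List.append_inj' hp (by simp)
    cases List.singleton_inj.mp hj
    exact ⟨s.dropLast, mem_subtree.mpr hs, p, hpl⟩

lemma sum_contextSets_succ {M : Type*} [AddCommMonoid M] (d : ℕ)
    (f : Finset (List (Fin m)) → M) :
    ∑ T ∈ contextSets m (d + 1), f T =
      f {[]} + ∑ g ∈ Fintype.piFinset fun _ => contextSets m d, f (graft g) := by
  rw [← add_sum_erase _ _ (singleton_nil_mem_contextSets _)]
  congr 1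
  have hnil : ∀ T ∈ (contextSets m (d + 1)).erase {[]}, [] ∉ T := fun T hT hnil =>
    (mem_erase.mp hT).1 (eq_singleton_nil_of_nil_mem (mem_erase.mp hT).2 hnil)
  symm
  refine sum_nbij' graft subtree (fun g hg => ?_) (fun T hT => ?_)
    (fun g _ => funext (subtree_graft g)) (fun T hT => graft_subtree (hnil T hT))
    (fun _ _ => rfl)
  · refine mem_erase.mpr ⟨fun h => nil_notMem_graft g (h ▸ mem_singleton_self _), ?_⟩
    exact graft_mem_contextSets (Fintype.mem_piFinset.mp hg)
  · exact Fintype.mem_piFinset.mpr (subtree_mem_contextSets (mem_erase.mp hT).2 (hnil T hT))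

lemma card_graft_eq_of_card_eq (hm : 0 < m) {g : Fin m → Finset (List (Fin m))} {k : Fin m → ℕ}
    (hk : ∀ j, #(g j) = (m - 1) * k j + 1) : #(graft g) = (m - 1) * (∑ j, k j + 1) + 1 := by
  simp only [card_graft, hk, sum_add_distrib, ← mul_sum, sum_const, card_univ, Fintype.card_fin,
    smul_eq_mul, mul_one]
  zify [hm]
  ring

lemma exists_card_eq_of_mem_contextSets (hm : 0 < m) {d : ℕ} {T : Finset (List (Fin m))}
    (hT : T ∈ contextSets m d) : ∃ k, #T = (m - 1) * k + 1 := by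
  induction d generalizing T with
  | zero => exact ⟨0, by simp_all [contextSets_zero]⟩
  | succ d ih =>
    by_cases hnil : [] ∈ T
    · exact ⟨0, by simp [eq_singleton_nil_of_nil_mem hT hnil]⟩
    · choose k hk using fun j => ih (subtree_mem_contextSets hT hnil j)
      exact ⟨_, graft_subtree hnil ▸ card_graft_eq_of_card_eq hm hk⟩

lemma modelPrior_singleton_nil_succ (γ : ℝ) (d : ℕ) : modelPrior m γ (d + 1) {[]} = γ := by
  simp [modelPrior, filter_singleton]

lemma modelPrior_of_card_eq (hm : 2 ≤ m) (γ : ℝ) (D : ℕ) {T : Finset (List (Fin m))} {k : ℕ}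
    (hk : #T = (m - 1) * k + 1) :
    modelPrior m γ D T = (1 - γ) ^ k * γ ^ #(T.filter fun t => t.length ≠ D) := by
  have hexp : #T - #(T.filter fun t => t.length = D) = #(T.filter fun t => t.length ≠ D) := by
    rw [← card_filter_add_card_filter_not (s := T) fun t => t.length = D, Nat.add_sub_cancel_left]
  rw [modelPrior, hexp, hk, Nat.add_sub_cancel, Nat.mul_div_cancel_left _ (by omega)]

lemma modelPrior_graft (hm : 2 ≤ m) (γ : ℝ) {d : ℕ} {g : Fin m → Finset (List (Fin m))}
    (hg : ∀ j, g j ∈ contextSets m d) :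
    modelPrior m γ (d + 1) (graft g) = (1 - γ) * ∏ j, modelPrior m γ d (g j) := by
  choose k hk using fun j => exists_card_eq_of_mem_contextSets (by omega) (hg j)
  rw [modelPrior_of_card_eq hm γ _ (card_graft_eq_of_card_eq (by omega) hk), filter_graft,
    card_graft, prod_congr rfl fun j _ => modelPrior_of_card_eq hm γ d (hk j), prod_mul_distrib,
    prod_pow_eq_pow_sum, prod_pow_eq_pow_sum, pow_succ]
  simp only [List.length_append, List.length_singleton, ne_eq, Nat.add_right_cancel_iff]
  ring

theorem Pw_eq_sum_contextSets (hm : 2 ≤ m) (γ : ℝ) (Pe : List (Fin m) → ℝ) (d : ℕ)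
    (s : List (Fin m)) :
    Pw m γ Pe d s = ∑ T ∈ contextSets m d, modelPrior m γ d T * ∏ t ∈ T, Pe (t ++ s) := by
  induction d generalizing s with
  | zero => simp [Pw, contextSets_zero, modelPrior, filter_singleton]
  | succ d ih =>
    rw [Pw, sum_contextSets_succ, modelPrior_singleton_nil_succ, prod_singleton, List.nil_append,
      prod_congr rfl fun j _ => ih (j :: s), prod_univ_sum, mul_sum]
    congr 1
    refine sum_congr rfl fun g hg => ?_
    rw [modelPrior_graft hm γ (Fintype.mem_piFinset.mp hg), prod_graft, mul_assoc,
      ← prod_mul_distrib]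
    simp

end ContextTree

theorem ctw_root_weighted_probability_general (m D : ℕ) (hm : 2 ≤ m) (γ : ℝ)
    (Pe : List (Fin m) → ℝ) :
    Pw m γ Pe D [] = ∑ S ∈ contextSets m D, modelPrior m γ D S * ∏ s ∈ S, Pe s := by
  simpa using ContextTree.Pw_eq_sum_contextSets hm γ Pe D []

/-- the root weighted probability is the `π_D`-mixture over all
complete proper context sets of the products of the leaf values. -/
theorem ctw_root_weighted_probability (m D : ℕ) (hm : 2 ≤ m) (γ : ℝ)
    (hγ : γ ∈ Set.Ioo (0:ℝ) 1) (Pe : List (Fin m) → ℝ) (hPe : ∀ s, 0 ≤ Pe s) :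
    Pw m γ Pe D [] = ∑ S ∈ contextSets m D, modelPrior m γ D S * ∏ s ∈ S, Pe s :=
  ctw_root_weighted_probability_general m D hm γ Pe
end

section
/- The KT probability P_e(a) equals the Dirichlet mixture of i.i.d. multinomial probabilities with Jeffreys prior: for a counter vector a over the m-ary alphabet, P_e(a) = ∫_{Δ_m} ∏_{j} θ_j^{a(j)} · Dir(θ; 1/2,...,1/2) dθ, where Dir(θ; 1/2,...,1/2) = Γ(m/2)/Γ(1/2)^m · ∏_j θ_j^{-1/2} is the Dirichlet(1/2,...,1/2) density on the probability simplex Δ_m. -/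
/-!
Peeling off the first coordinate `t` of a point of the simplex and rescaling the others by `1 - t`
(Jacobian `(1 - t) ^ n`) turns the Dirichlet integral `D(α) = ∫_Δ ∏ θ_j ^ (α_j - 1)` into
`B(α₀, α₁ + ⋯ + αₙ) · D(α₁, …, αₙ)`, so by induction `D(α) = ∏ Γ(α_j) / Γ(∑ α_j)`.
For `α_j = a(j) + 1/2`, both ascending products in `P_e(a)` are ratios `Γ(s + k) / Γ(s)`,
and the two sides agree.
-/

open Finset MeasureTheory

/-- The Krichevsky–Trofimov probability of a counter vector `a` over an
`m`-ary alphabet. -/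
noncomputable def ktProb (m : ℕ) (a : Fin m → ℕ) : ℝ :=
  (∏ j : Fin m, ∏ i ∈ Finset.range (a j), ((i : ℝ) + 1/2)) /
    (∏ i ∈ Finset.range (∑ j, a j), ((m : ℝ)/2 + (i : ℝ)))

open Set Real ENNReal ProbabilityTheory

theorem setLIntegral_Ioo_rpow_mul_one_sub_rpow {α β : ℝ} (hα : 0 < α) (hβ : 0 < β) :
    ∫⁻ t in Set.Ioo 0 1, ENNReal.ofReal (t ^ (α - 1) * (1 - t) ^ (β - 1)) =
      ENNReal.ofReal (beta α β) := by
  have hB := beta_pos hα hβ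
  rw [← mul_one (ENNReal.ofReal (beta α β)), ← lintegral_betaPDF_eq_one hα hβ, lintegral_betaPDF,
    ← lintegral_const_mul' _ _ ofReal_ne_top]
  refine setLIntegral_congr_fun measurableSet_Ioo fun t _ => ?_
  rw [← ENNReal.ofReal_mul hB.le]
  field_simp

theorem prod_range_add_eq_Gamma_div {s : ℝ} (hs : 0 < s) (k : ℕ) :
    ∏ i ∈ range k, (s + i) = Gamma (s + k) / Gamma s := by
  induction k with
  | zero => simp [(Gamma_pos_of_pos hs).ne']
  | succ k ih =>
    rw [prod_range_succ, ih, Nat.cast_succ, ← add_assoc, Gamma_add_one (by positivity)]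
    ring

theorem lintegral_eq_ofReal_pow_mul_lintegral_comp_smul {E : Type*} [NormedAddCommGroup E]
    [NormedSpace ℝ E] [MeasurableSpace E] [BorelSpace E] [FiniteDimensional ℝ E]
    (μ : Measure E) [μ.IsAddHaarMeasure] (g : E → ℝ≥0∞) {r : ℝ} (hr : 0 < r) :
    ∫⁻ y, g y ∂μ = ENNReal.ofReal (r ^ Module.finrank ℝ E) * ∫⁻ z, g (r • z) ∂μ := by
  have hcomp := lintegral_map_equiv (μ := μ) g (MeasurableEquiv.smul₀ r hr.ne')
  rw [MeasurableEquiv.coe_smul₀, Measure.map_addHaar_smul _ hr.ne', lintegral_smul_measure,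
    abs_of_pos (by positivity), smul_eq_mul] at hcomp
  rw [← hcomp, ← mul_assoc, ← ENNReal.ofReal_mul (by positivity), mul_inv_cancel₀ (by positivity),
    ENNReal.ofReal_one, one_mul]

theorem lintegral_pi_fin_succ {α : Type*} [MeasureSpace α] [SigmaFinite (volume : Measure α)]
    {n : ℕ} (f : (Fin (n + 1) → α) → ℝ≥0∞) (hf : Measurable f) :
    ∫⁻ x, f x = ∫⁻ t, ∫⁻ y : Fin n → α, f (Fin.cons t y) := by
  let e := MeasurableEquiv.piFinSuccAbove (fun _ : Fin (n + 1) => α) 0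
  rw [← ((volume_preserving_piFinSuccAbove (fun _ => α) 0).symm).lintegral_comp hf,
    Measure.volume_eq_prod, lintegral_prod (fun p => f (e.symm p))
      (hf.comp e.symm.measurable).aemeasurable]
  simp only [e, MeasurableEquiv.piFinSuccAbove_symm_apply, Fin.insertNthEquiv, Equiv.coe_fn_mk,
    Fin.insertNth_zero']

def openSimplex (n : ℕ) : Set (Fin n → ℝ) := {x | (∀ i, 0 < x i) ∧ ∑ i, x i < 1}

def simplexPoint {n : ℕ} (x : Fin n → ℝ) : Fin (n + 1) → ℝ :=
  fun j => if h : (j : ℕ) < n then x ⟨j, h⟩ else 1 - ∑ i, x i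

section Simplex

variable {n : ℕ}

@[simp]
theorem simplexPoint_castSucc (x : Fin n → ℝ) (i : Fin n) : simplexPoint x i.castSucc = x i := by
  simp [simplexPoint]

@[simp]
theorem simplexPoint_last (x : Fin n → ℝ) : simplexPoint x (Fin.last n) = 1 - ∑ i, x i := by
  simp [simplexPoint]

@[fun_prop]
theorem measurable_simplexPoint : Measurable (simplexPoint : (Fin n → ℝ) → Fin (n + 1) → ℝ) := by
  refine measurable_pi_lambda _ fun j => ?_
  unfold simplexPoint
  split_ifs <;> fun_prop

theorem measurableSet_openSimplex : MeasurableSet (openSimplex n) := by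
  simp only [openSimplex, ofPred_and, ofPred_forall]
  exact (MeasurableSet.iInter fun i =>
    measurableSet_lt measurable_const (measurable_pi_apply i)).inter
    (measurableSet_lt (by fun_prop) measurable_const)

theorem mem_openSimplex_iff {x : Fin n → ℝ} :
    x ∈ openSimplex n ↔ ∀ j, 0 < simplexPoint x j := by
  simp [Fin.forall_fin_succ', openSimplex]

theorem simplexPoint_cons_smul (t : ℝ) (z : Fin n → ℝ) :
    simplexPoint (Fin.cons t ((1 - t) • z) : Fin (n + 1) → ℝ) =
      Fin.cons t ((1 - t) • simplexPoint z) := by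
  ext j
  induction j using Fin.lastCases with
  | last =>
    simp only [simplexPoint_last, Fin.sum_cons, Pi.smul_apply, smul_eq_mul, ← Finset.mul_sum]
    rw [← Fin.succ_last, Fin.cons_succ]
    simp only [Pi.smul_apply, simplexPoint_last, smul_eq_mul]
    ring
  | cast i =>
    induction i using Fin.cases with
    | zero => rw [simplexPoint_castSucc, Fin.castSucc_zero, Fin.cons_zero, Fin.cons_zero]
    | succ i =>
      rw [simplexPoint_castSucc, ← Fin.succ_castSucc]
      simp

theorem cons_smul_mem_openSimplex_iff {t : ℝ} (ht : t ∈ Set.Ioo 0 1) {z : Fin n → ℝ} :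
    (Fin.cons t ((1 - t) • z) : Fin (n + 1) → ℝ) ∈ openSimplex (n + 1) ↔ z ∈ openSimplex n := by
  have h1t : 0 < 1 - t := sub_pos.2 ht.2
  simp [mem_openSimplex_iff, simplexPoint_cons_smul, Fin.forall_fin_succ, ht.1,
    mul_pos_iff_of_pos_left h1t]

theorem mem_Ioo_of_cons_mem_openSimplex {t : ℝ} {y : Fin n → ℝ}
    (h : (Fin.cons t y : Fin (n + 1) → ℝ) ∈ openSimplex (n + 1)) : t ∈ Set.Ioo 0 1 := by
  obtain ⟨hpos, hsum⟩ := h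
  simp only [Fin.forall_fin_succ, Fin.cons_zero, Fin.cons_succ] at hpos
  rw [Fin.sum_cons] at hsum
  have : 0 ≤ ∑ i, y i := Finset.sum_nonneg fun i _ => (hpos.2 i).le
  exact ⟨hpos.1, by linarith⟩

theorem setLIntegral_openSimplex_succ (f : (Fin (n + 1) → ℝ) → ℝ≥0∞) (hf : Measurable f) :
    ∫⁻ x in openSimplex (n + 1), f x =
      ∫⁻ t in Set.Ioo 0 1, ENNReal.ofReal ((1 - t) ^ n) *
        ∫⁻ z in openSimplex n, f (Fin.cons t ((1 - t) • z)) := by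
  rw [← lintegral_indicator measurableSet_openSimplex,
    lintegral_pi_fin_succ _ (hf.indicator measurableSet_openSimplex),
    ← lintegral_indicator measurableSet_Ioo]
  refine lintegral_congr fun t => ?_
  by_cases ht : t ∈ Set.Ioo 0 1
  · rw [indicator_of_mem ht,
      lintegral_eq_ofReal_pow_mul_lintegral_comp_smul volume _ (sub_pos.2 ht.2),
      Module.finrank_fin_fun,
      ← lintegral_indicator measurableSet_openSimplex]
    congr 2 with z
    classical
    exact if_congr (cons_smul_mem_openSimplex_iff ht) rfl rfl
  · rw [indicator_of_notMem ht]
    simp only [indicator_of_notMem (fun h => ht (mem_Ioo_of_cons_mem_openSimplex h)),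
      lintegral_zero]

theorem prod_cons_smul_rpow {t s : ℝ} (hs : 0 < s) {w : Fin n → ℝ} (hw : ∀ i, 0 ≤ w i)
    (c : Fin (n + 1) → ℝ) :
    ∏ j, (Fin.cons t (s • w) : Fin (n + 1) → ℝ) j ^ c j =
      t ^ c 0 * s ^ (∑ i : Fin n, c i.succ) * ∏ i, w i ^ c i.succ := by
  simp only [Fin.prod_univ_succ, Fin.cons_zero, Fin.cons_succ, Pi.smul_apply, smul_eq_mul,
    mul_rpow hs.le (hw _), prod_mul_distrib, ← rpow_sum_of_pos hs, mul_assoc]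

theorem pow_mul_prod_simplexPoint_cons_smul_rpow {t : ℝ} (ht : t ∈ Set.Ioo 0 1) {z : Fin n → ℝ}
    (hz : z ∈ openSimplex n) (α : Fin (n + 2) → ℝ) :
    (1 - t) ^ n * ∏ j, simplexPoint (Fin.cons t ((1 - t) • z) : Fin (n + 1) → ℝ) j ^ (α j - 1) =
      t ^ (α 0 - 1) * (1 - t) ^ (∑ i : Fin (n + 1), α i.succ - 1) *
        ∏ i, simplexPoint z i ^ (α i.succ - 1) := by
  have h1t : 0 < 1 - t := sub_pos.2 ht.2
  have hpow : (1 - t) ^ n * (1 - t) ^ (∑ i : Fin (n + 1), (α i.succ - 1)) =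
      (1 - t) ^ (∑ i : Fin (n + 1), α i.succ - 1) := by
    rw [← Real.rpow_natCast, ← rpow_add h1t, sum_sub_distrib]
    congr 1
    simp
    ring
  rw [simplexPoint_cons_smul, prod_cons_smul_rpow h1t fun i => (mem_openSimplex_iff.1 hz i).le,
    ← hpow]
  ring

theorem lintegral_openSimplex_prod_rpow (α : Fin (n + 1) → ℝ) (hα : ∀ j, 0 < α j) :
    ∫⁻ x in openSimplex n, ENNReal.ofReal (∏ j, simplexPoint x j ^ (α j - 1)) =
      ENNReal.ofReal ((∏ j, Gamma (α j)) / Gamma (∑ j, α j)) := by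
  induction n with
  | zero =>
    simp [openSimplex, simplexPoint, volume_pi, (Gamma_pos_of_pos (hα 0)).ne']
  | succ n ih =>
    set β := ∑ i : Fin (n + 1), α i.succ
    have hβ : 0 < β := Finset.sum_pos (fun i _ => hα _) univ_nonempty
    have hmeas : Measurable fun x : Fin (n + 1) → ℝ =>
        ENNReal.ofReal (∏ j, simplexPoint x j ^ (α j - 1)) := by fun_prop
    rw [setLIntegral_openSimplex_succ _ hmeas]
    calc _ = ∫⁻ t in Set.Ioo 0 1, ENNReal.ofReal (t ^ (α 0 - 1) * (1 - t) ^ (β - 1)) *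
          ENNReal.ofReal ((∏ i : Fin (n + 1), Gamma (α i.succ)) / Gamma β) := by
          refine setLIntegral_congr_fun measurableSet_Ioo fun t ht => ?_
          rw [← ih _ fun i => hα _, ← lintegral_const_mul' _ _ ofReal_ne_top,
            ← lintegral_const_mul' _ _ ofReal_ne_top]
          refine setLIntegral_congr_fun measurableSet_openSimplex fun z hz => ?_
          have h1t : 0 ≤ 1 - t := (sub_pos.2 ht.2).le
          rw [← ENNReal.ofReal_mul (pow_nonneg h1t _),
            ← ENNReal.ofReal_mul (mul_nonneg (rpow_nonneg ht.1.le _) (rpow_nonneg h1t _)),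
            pow_mul_prod_simplexPoint_cons_smul_rpow ht hz]
      _ = ENNReal.ofReal ((∏ j, Gamma (α j)) / Gamma (∑ j, α j)) := by
        rw [lintegral_mul_const' _ _ ofReal_ne_top,
          setLIntegral_Ioo_rpow_mul_one_sub_rpow (hα 0) hβ,
          ← ENNReal.ofReal_mul (beta_pos (hα 0) hβ).le, beta,
          Fin.prod_univ_succ (fun j => Gamma (α j)), Fin.sum_univ_succ α]
        have := (Gamma_pos_of_pos hβ).ne'
        congr 1
        field_simp
        simp [β]

theorem integral_openSimplex_prod_rpow (α : Fin (n + 1) → ℝ) (hα : ∀ j, 0 < α j) :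
    ∫ x in openSimplex n, ∏ j, simplexPoint x j ^ (α j - 1) =
      (∏ j, Gamma (α j)) / Gamma (∑ j, α j) := by
  have hnonneg : 0 ≤ (∏ j, Gamma (α j)) / Gamma (∑ j, α j) :=
    div_nonneg (prod_nonneg fun j _ => (Gamma_pos_of_pos (hα j)).le)
      (Gamma_pos_of_pos (sum_pos (fun j _ => hα j) univ_nonempty)).le
  rw [integral_eq_lintegral_of_nonneg_ae, lintegral_openSimplex_prod_rpow α hα,
    toReal_ofReal hnonneg]
  · exact ae_restrict_of_forall_mem measurableSet_openSimplex fun x hx =>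
      prod_nonneg fun j _ => rpow_nonneg (mem_openSimplex_iff.1 hx j).le _
  · exact Measurable.aestronglyMeasurable (by fun_prop)

end Simplex

theorem ktProb_eq_Gamma {m : ℕ} (hm : 0 < m) (a : Fin m → ℕ) :
    ktProb m a = Gamma (m / 2) / Gamma (1 / 2) ^ m *
      ((∏ j, Gamma (a j + 1 / 2)) / Gamma (∑ j, ((a j : ℝ) + 1 / 2))) := by
  have hnum : ∀ j, ∏ i ∈ range (a j), ((i : ℝ) + 1 / 2) = Gamma (a j + 1 / 2) / Gamma (1 / 2) := by
    intro j
    rw [add_comm _ (1 / 2 : ℝ), ← prod_range_add_eq_Gamma_div one_half_pos]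
    exact prod_congr rfl fun i _ => add_comm _ _
  have hden := prod_range_add_eq_Gamma_div (s := m / 2) (by positivity) (∑ j, a j)
  have hsum : ∑ j, ((a j : ℝ) + 1 / 2) = m / 2 + ↑(∑ j, a j) := by
    simp [sum_add_distrib]
    ring
  rw [ktProb, prod_congr rfl fun j _ => hnum j, hden, Finset.prod_div_distrib, prod_const,
    card_univ, Fintype.card_fin, hsum]
  have := (Gamma_pos_of_pos one_half_pos).ne'
  have := (Gamma_pos_of_pos (by positivity : (0 : ℝ) < m / 2)).ne'
  have := (Gamma_pos_of_pos (by positivity : (0 : ℝ) < m / 2 + ↑(∑ j, a j))).ne'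
  field_simp
  ring_nf

/-- the KT probability equals the Dirichlet(1/2,…,1/2) (Jeffreys
prior) mixture of i.i.d. multinomial probabilities.  The probability simplex
is parametrised by its first `m-1` coordinates, the last one being
`1 - ∑ x i`; the integrand `∏_j θ_j^{a(j) - 1/2}` combines the multinomial
likelihood `∏_j θ_j^{a(j)}` with the Jeffreys density
`Γ(m/2)/Γ(1/2)^m ∏_j θ_j^{-1/2}`. -/
theorem ktProb_eq_dirichlet_mixture (m : ℕ) (hm : 2 ≤ m) (a : Fin m → ℕ) :
    ktProb m a =
      ∫ x in {x : Fin (m - 1) → ℝ | (∀ i, 0 < x i) ∧ ∑ i, x i < 1},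
        (Real.Gamma ((m : ℝ)/2) / Real.Gamma (1/2) ^ m) *
          ∏ j : Fin m,
            (if h : (j : ℕ) < m - 1 then x ⟨j, h⟩ else 1 - ∑ i, x i)
              ^ ((a j : ℝ) - 1/2) := by
  obtain ⟨n, rfl⟩ : ∃ n, m = n + 1 := ⟨m - 1, by omega⟩
  change _ = ∫ x in openSimplex n, _ * ∏ j, simplexPoint x j ^ ((a j : ℝ) - 1 / 2)
  have hexp : ∀ j, (a j : ℝ) - 1 / 2 = ((a j : ℝ) + 1 / 2) - 1 := fun j => by ring
  simp_rw [hexp]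
  rw [integral_const_mul, integral_openSimplex_prod_rpow _ fun j => by positivity]
  exact ktProb_eq_Gamma n.succ_pos a
end
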